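/- arXiv:nlin/0007024 — 5 statements merged into one kernel-verified Lean document; each statement's English description precedes it below -/
import Mathlib

section
/- Let n ≥ 2 and r ≥ 1 be integers. Let p_0, p_1, …, p_r be diagonal n×n complex matrices such that the diagonal entries of p_0 are pairwise distinct, and let ω_0, ω_1, …, ω_r be arbitrary n×n complex matrices. Then the following two systems of equations are equivalent: (I) Σ_{j=0}^{k} [p_j, ω_{k−j}] = 0 for every 0 ≤ k ≤ r−1, together with Σ_{j=0}^{r} [p_j, ω_{r−j}] = (r+1)·ω_0; (II) ω_0 = 0 and Σ_{j=0}^{k} [p_j, ω_{k−j}] = 0 for every 0 ≤ k ≤ r. (System (I) is the coefficient form of the condition that Ω = ω/z^{r+1} satisfies Ω = O(z^{−r−1}) and ∇Ω = ∂_z Ω − [A,Ω] = O(z^{−r−1}) for A = p/z^{r+1} + H with H holomorphic, where p = p_0 + p_1 z + … + p_r z^r and ω = Σ ω_i z^i; system (II) is the coefficient form of 'ω_0 = 0 and [ω,p] = O(z^{r+1})'.) -/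
/-!
Entrywise, commutation with a diagonal matrix `D` multiplies `M a b` by `D a a - D b b`.
Hence the `k = 0` equation `[p 0, ω 0] = 0` of system (I) forces `ω 0` to be diagonal, because
the diagonal entries of `p 0` are distinct, while every commutator `[p j, ·]` has zero diagonal,
so the diagonal of the last equation of (I) reads `(r + 1) ω 0 a a = 0`. Thus `ω 0 = 0`, and then
the last equation of (I) is the `k = r` equation of (II). The converse is immediate.
-/

namespace Matrix

variable {ι κ R : Type*} [DecidableEq ι] [CommRing R]

theorem IsDiag.eq_zero_of_diag_eq_zero {M : Matrix ι ι R} (hM : M.IsDiag)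
    (h : ∀ a, M a a = 0) : M = 0 := by
  rw [← hM.diagonal_diag, diagonal_eq_zero]
  exact funext h

variable [Fintype ι]

theorem IsDiag.mul_sub_mul_apply {D : Matrix ι ι R} (hD : D.IsDiag) (M : Matrix ι ι R)
    (a b : ι) : (D * M - M * D) a b = (D a a - D b b) * M a b := by
  conv_lhs => rw [← hD.diagonal_diag]
  rw [sub_apply, diagonal_mul, mul_diagonal, diag_apply, diag_apply]
  ring

theorem IsDiag.mul_sub_mul_apply_self {D : Matrix ι ι R} (hD : D.IsDiag) (M : Matrix ι ι R)
    (a : ι) : (D * M - M * D) a a = 0 := by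
  rw [hD.mul_sub_mul_apply, sub_self, zero_mul]

theorem sum_mul_sub_mul_apply_self {s : Finset κ} {p ω : κ → Matrix ι ι R}
    (hp : ∀ j ∈ s, (p j).IsDiag) (a : ι) :
    (∑ j ∈ s, (p j * ω j - ω j * p j)) a a = 0 := by
  rw [sum_apply]
  exact Finset.sum_eq_zero fun j hj => (hp j hj).mul_sub_mul_apply_self _ a

theorem isDiag_of_mul_sub_mul_eq_zero [NoZeroDivisors R] {D M : Matrix ι ι R} (hD : D.IsDiag)
    (hD_ne : ∀ a b, a ≠ b → D a a ≠ D b b) (h : D * M - M * D = 0) : M.IsDiag := by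
  intro a b hab
  have hab_entry := congrFun (congrFun h a) b
  rw [hD.mul_sub_mul_apply, zero_apply] at hab_entry
  exact (mul_eq_zero.mp hab_entry).resolve_left (sub_ne_zero.mpr (hD_ne a b hab))

end Matrix

theorem stmt0_general (n r : ℕ) (hr : 1 ≤ r)
    (p ω : ℕ → Matrix (Fin n) (Fin n) ℂ)
    (hpdiag : ∀ j, j ≤ r → (p j).IsDiag)
    (hpdist : ∀ a b : Fin n, a ≠ b → p 0 a a ≠ p 0 b b) :
    ((∀ k, k < r →
        ∑ j ∈ Finset.range (k + 1), (p j * ω (k - j) - ω (k - j) * p j) = 0) ∧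
      ∑ j ∈ Finset.range (r + 1), (p j * ω (r - j) - ω (r - j) * p j)
        = ((r : ℂ) + 1) • ω 0)
    ↔ (ω 0 = 0 ∧ ∀ k, k ≤ r →
        ∑ j ∈ Finset.range (k + 1), (p j * ω (k - j) - ω (k - j) * p j) = 0) := by
  constructor
  · rintro ⟨hlow, htop⟩
    have hω0_isDiag : (ω 0).IsDiag :=
      Matrix.isDiag_of_mul_sub_mul_eq_zero (hpdiag 0 r.zero_le) hpdist (by simpa using hlow 0 hr)
    have hω0 : ω 0 = 0 := hω0_isDiag.eq_zero_of_diag_eq_zero fun a => by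
      have htop_aa := congrFun (congrFun htop a) a
      rw [Matrix.sum_mul_sub_mul_apply_self (ω := fun j => ω (r - j))
        (fun j hj => hpdiag j (Nat.lt_succ_iff.mp (Finset.mem_range.mp hj))), Matrix.smul_apply,
        smul_eq_mul] at htop_aa
      exact (mul_eq_zero.mp htop_aa.symm).resolve_left (Nat.cast_add_one_ne_zero r)
    refine ⟨hω0, fun k hk => ?_⟩
    rcases hk.lt_or_eq with hk | rfl
    · exact hlow k hk
    · rw [htop, hω0, smul_zero]
  · rintro ⟨hω0, hall⟩
    exact ⟨fun k hk => hall k hk.le, by rw [hall r le_rfl, hω0, smul_zero]⟩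

/-- Lemma 1 of the paper (coefficient form, generic irregular case `r ≥ 1`):
for diagonal matrices `p 0, …, p r` with `p 0` having pairwise distinct diagonal
entries, the system (I) `∑_{j≤k} [p j, ω (k-j)] = 0` for `k < r` together with
`∑_{j≤r} [p j, ω (r-j)] = (r+1) ω 0` is equivalent to the system (II)
`ω 0 = 0` and `∑_{j≤k} [p j, ω (k-j)] = 0` for all `k ≤ r`. -/
theorem stmt0 (n r : ℕ) (hn : 2 ≤ n) (hr : 1 ≤ r)
    (p ω : ℕ → Matrix (Fin n) (Fin n) ℂ)
    (hpdiag : ∀ j, j ≤ r → (p j).IsDiag)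
    (hpdist : ∀ a b : Fin n, a ≠ b → p 0 a a ≠ p 0 b b) :
    ((∀ k, k < r →
        ∑ j ∈ Finset.range (k + 1), (p j * ω (k - j) - ω (k - j) * p j) = 0) ∧
      ∑ j ∈ Finset.range (r + 1), (p j * ω (r - j) - ω (r - j) * p j)
        = ((r : ℂ) + 1) • ω 0)
    ↔ (ω 0 = 0 ∧ ∀ k, k ≤ r →
        ∑ j ∈ Finset.range (k + 1), (p j * ω (k - j) - ω (k - j) * p j) = 0) :=
  stmt0_general n r hr p ω hpdiag hpdist
end

section
/- Let n ≥ 2 and r ≥ 1 be integers and q a constant diagonal n×n complex matrix. Let U be an open subset of {(z,t) ∈ ℂ² : z ≠ 0}, and let p, H : U → M_n(ℂ) be holomorphic, where p(z,t) is diagonal with pairwise distinct diagonal entries p_1, …, p_n at every point. Define G : U → M_n(ℂ) entrywise by G_{ab} = z·H_{ab}·(q_a − q_b)/(p_a − p_b) for a ≠ b and G_{aa} = 0. Assume the evolution equations ∂_t p = −r·q and ∂_t H = ∂_z G − [H, G] hold on U. Then on all of U: ∂_t( z^{−r−1}·p + H ) = ∂_z( z^{−r}·q + G ) − [ z^{−r−1}·p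 + H , z^{−r}·q + G ]. -/
/-- Entrywise partial derivative in the first variable `z` of a matrix-valued
function of `(z, t) ∈ ℂ × ℂ`. -/
noncomputable def partialZ {n : ℕ} (F : ℂ × ℂ → Matrix (Fin n) (Fin n) ℂ)
    (w : ℂ × ℂ) : Matrix (Fin n) (Fin n) ℂ :=
  Matrix.of fun a b => deriv (fun z : ℂ => F (z, w.2) a b) w.1

/-- Entrywise partial derivative in the second variable `t` of a matrix-valued
function of `(z, t) ∈ ℂ × ℂ`. -/
noncomputable def partialT {n : ℕ} (F : ℂ × ℂ → Matrix (Fin n) (Fin n) ℂ)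
    (w : ℂ × ℂ) : Matrix (Fin n) (Fin n) ℂ :=
  Matrix.of fun a b => deriv (fun t : ℂ => F (w.1, t) a b) w.2

/-- Flatness of the connection constructed in the proof of Proposition 2 of the
paper: with `A = z^{-r-1} p + H` and `Ω = z^{-r} q + G`, the evolution equations
`∂_t p = -r q`, `∂_t H = ∂_z G - [H, G]` imply the local deformation equation
`∂_t A = ∂_z Ω - [A, Ω]` on `U`. -/
theorem stmt6 (n r : ℕ) (hn : 2 ≤ n) (hr : 1 ≤ r) (q : Fin n → ℂ)
    (U : Set (ℂ × ℂ)) (hU : IsOpen U) (hU0 : ∀ w ∈ U, w.1 ≠ 0)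
    (p : ℂ × ℂ → Fin n → ℂ) (H : ℂ × ℂ → Matrix (Fin n) (Fin n) ℂ)
    (hphol : ∀ a : Fin n, DifferentiableOn ℂ (fun w => p w a) U)
    (hHhol : ∀ a b : Fin n, DifferentiableOn ℂ (fun w => H w a b) U)
    (hpdist : ∀ w ∈ U, ∀ a b : Fin n, a ≠ b → p w a ≠ p w b)
    (G : ℂ × ℂ → Matrix (Fin n) (Fin n) ℂ)
    (hG : ∀ w ∈ U, ∀ a b : Fin n,
      G w a b = if a = b then 0 else w.1 * H w a b * (q a - q b) / (p w a - p w b))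
    (hevolp : ∀ w ∈ U, ∀ a : Fin n,
      HasDerivAt (fun t : ℂ => p (w.1, t) a) (-(r : ℂ) * q a) w.2)
    (hevolH : ∀ w ∈ U, ∀ a b : Fin n,
      HasDerivAt (fun t : ℂ => H (w.1, t) a b)
        ((partialZ G w - (H w * G w - G w * H w)) a b) w.2) :
    ∀ w ∈ U,
      partialT (fun w' => (w'.1 ^ (r + 1))⁻¹ • Matrix.diagonal (p w') + H w') w
        = partialZ (fun w' => (w'.1 ^ r)⁻¹ • Matrix.diagonal q + G w') w
          - (((w.1 ^ (r + 1))⁻¹ • Matrix.diagonal (p w) + H w)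
                * ((w.1 ^ r)⁻¹ • Matrix.diagonal q + G w)
              - ((w.1 ^ r)⁻¹ • Matrix.diagonal q + G w)
                * ((w.1 ^ (r + 1))⁻¹ • Matrix.diagonal (p w) + H w)) := by
  intro w hw
  have hz : w.1 ≠ 0 := hU0 w hw
  obtain ⟨s, rfl⟩ : ∃ s, r = s + 1 := ⟨r - 1, (Nat.succ_pred_eq_of_pos hr).symm⟩
  set r := s + 1 with hrdef
  -- commutator simplification
  have hcomm :
      ((w.1 ^ (r + 1))⁻¹ • Matrix.diagonal (p w) + H w)
          * ((w.1 ^ r)⁻¹ • Matrix.diagonal q + G w)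
        - ((w.1 ^ r)⁻¹ • Matrix.diagonal q + G w)
          * ((w.1 ^ (r + 1))⁻¹ • Matrix.diagonal (p w) + H w)
      = H w * G w - G w * H w := by
    ext a b
    simp only [Matrix.sub_apply, Matrix.add_mul, Matrix.mul_add, Matrix.add_apply,
      Matrix.smul_mul, Matrix.mul_smul, Matrix.smul_apply, smul_eq_mul,
      Matrix.diagonal_mul, Matrix.mul_diagonal, Matrix.diagonal_mul_diagonal,
      Matrix.diagonal_apply]
    by_cases hab : a = b
    · subst hab; simp; ring
    · have hsub : p w a - p w b ≠ 0 := sub_ne_zero.mpr (hpdist w hw a b hab)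
      rw [hG w hw a b]
      simp only [if_neg hab]
      have hc : w.1 * H w a b * (q a - q b) / (p w a - p w b) * (p w a - p w b)
          = w.1 * H w a b * (q a - q b) := div_mul_cancel₀ _ hsub
      have hk : (w.1 ^ (r + 1))⁻¹ * w.1 = (w.1 ^ r)⁻¹ := by
        rw [pow_succ, mul_inv, mul_assoc, inv_mul_cancel₀ hz, mul_one]
      linear_combination (w.1 ^ (r + 1))⁻¹ * hc + (H w a b * (q a - q b)) * hk
  rw [hcomm]
  ext a b
  simp only [partialT, partialZ, Matrix.of_apply, Matrix.add_apply, Matrix.smul_apply,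
    smul_eq_mul, Matrix.sub_apply]
  -- LHS derivative
  have hL : HasDerivAt
      (fun t : ℂ => (w.1 ^ (r + 1))⁻¹ * Matrix.diagonal (p (w.1, t)) a b + H (w.1, t) a b)
      ((w.1 ^ (r + 1))⁻¹ * (if a = b then -(r : ℂ) * q a else 0)
        + (partialZ G w - (H w * G w - G w * H w)) a b) w.2 := by
    by_cases hab : a = b
    · subst hab
      simp only [Matrix.diagonal_apply_eq, if_pos rfl]
      exact ((hevolp w hw a).const_mul _).add (hevolH w hw a a)
    · simp only [Matrix.diagonal_apply_ne _ hab, if_neg hab, mul_zero, zero_add]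
      have := (hevolH w hw a b).const_add ((w.1 ^ (r + 1))⁻¹ * 0)
      simpa using this
  rw [hL.deriv]
  -- RHS: split the z-derivative
  have hmem : ∀ᶠ z in nhds w.1, (z, w.2) ∈ U := by
    have : ContinuousAt (fun z : ℂ => (z, w.2)) w.1 := by fun_prop
    exact this (hU.mem_nhds (by simpa using hw))
  have hGdiff : DifferentiableAt ℂ (fun z : ℂ => G (z, w.2) a b) w.1 := by
    by_cases hab : a = b
    · have heq : (fun z : ℂ => G (z, w.2) a b) =ᶠ[nhds w.1] fun _ => (0 : ℂ) := by
        filter_upwards [hmem] with z hz'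
        rw [hG _ hz' a b, if_pos hab]
      exact (differentiableAt_const 0).congr_of_eventuallyEq heq
    · have hpz : ∀ c : Fin n, DifferentiableAt ℂ (fun z : ℂ => p (z, w.2) c) w.1 := by
        intro c
        have h1 : DifferentiableAt ℂ (fun w' => p w' c) w :=
          ((hphol c) w hw).differentiableAt (hU.mem_nhds hw)
        have h2 : DifferentiableAt ℂ (fun z : ℂ => (z, w.2)) w.1 :=
          differentiableAt_id.prodMk (differentiableAt_const _)
        exact h1.comp w.1 h2
      have hHz : DifferentiableAt ℂ (fun z : ℂ => H (z, w.2) a b) w.1 := by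
        have h1 : DifferentiableAt ℂ (fun w' => H w' a b) w :=
          ((hHhol a b) w hw).differentiableAt (hU.mem_nhds hw)
        have h2 : DifferentiableAt ℂ (fun z : ℂ => (z, w.2)) w.1 :=
          differentiableAt_id.prodMk (differentiableAt_const _)
        exact h1.comp w.1 h2
      have heq : (fun z : ℂ => G (z, w.2) a b) =ᶠ[nhds w.1]
          fun z : ℂ => z * H (z, w.2) a b * (q a - q b) / (p (z, w.2) a - p (z, w.2) b) := by
        filter_upwards [hmem] with z hz'
        rw [hG _ hz' a b, if_neg hab]
      have hd : DifferentiableAt ℂ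
          (fun z : ℂ => z * H (z, w.2) a b * (q a - q b) / (p (z, w.2) a - p (z, w.2) b)) w.1 := by
        apply DifferentiableAt.div
        · exact ((differentiableAt_id.mul hHz).mul (differentiableAt_const _))
        · exact (hpz a).sub (hpz b)
        · exact sub_ne_zero.mpr (hpdist w hw a b hab)
      exact hd.congr_of_eventuallyEq heq
  have hpow : HasDerivAt (fun z : ℂ => (z ^ r)⁻¹ * Matrix.diagonal q a b)
      (-(↑r * w.1 ^ (r - 1)) / (w.1 ^ r) ^ 2 * Matrix.diagonal q a b) w.1 := by
    exact ((hasDerivAt_pow r w.1).inv (pow_ne_zero r hz)).mul_const _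
  have hsplit : deriv (fun z : ℂ => (z ^ r)⁻¹ * Matrix.diagonal q a b + G (z, w.2) a b) w.1
      = -(↑r * w.1 ^ (r - 1)) / (w.1 ^ r) ^ 2 * Matrix.diagonal q a b
        + deriv (fun z : ℂ => G (z, w.2) a b) w.1 := by
    rw [deriv_fun_add hpow.differentiableAt hGdiff, hpow.deriv]
  rw [hsplit]
  have hpZ : deriv (fun z : ℂ => G (z, w.2) a b) w.1 = partialZ G w a b := rfl
  rw [hpZ]
  have hcoef : (w.1 ^ (r + 1))⁻¹ * (if a = b then -(r : ℂ) * q a else 0)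
      = -(↑r * w.1 ^ (r - 1)) / (w.1 ^ r) ^ 2 * Matrix.diagonal q a b := by
    by_cases hab : a = b
    · subst hab
      simp only [Matrix.diagonal_apply_eq, if_pos rfl, hrdef]
      have h1 : s + 1 - 1 = s := rfl
      rw [h1]
      field_simp
      simp only [ite_true]
      ring
    · simp [Matrix.diagonal_apply_ne _ hab, if_neg hab]
  simp only [partialZ, Matrix.sub_apply, Matrix.of_apply] at hcoef ⊢
  rw [hcoef]
  ring
end

section
/- Let n ≥ 2 and r ≥ 1 be integers and q, q̃ constant diagonal n×n complex matrices with diagonal entries q_a and q̃_a. Let U ⊆ ℂ³ be open with coordinates (z, s, t), and let p, H : U → M_n(ℂ) be holomorphic, where p is diagonal with pairwise distinct diagonal entries p_a at every point and H has all diagonal entries zero. Define G, G̃ : U → M_n(ℂ) entrywise by G_{ab} = z·H_{ab}·(q_a − q_b)/(p_a − p_b) and G̃_{ab} = z·H_{ab}·(q̃_a − q̃_b)/(p_a − p_b) for a ≠ b, with zero diagonal entries. Assume ∂_s p = −r·q, ∂_t p = −r·q̃, ∂_s H = ∂_z G − [H, G], and ∂_t H = ∂_z G̃ − [H, G̃]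 on U. Then ∂_s G̃ − ∂_t G = [G, G̃] on U. -/
/-- Entrywise partial derivative in the first variable `z` of a matrix-valued
function of `(z, s, t) ∈ ℂ × ℂ × ℂ`. -/
noncomputable def partialZ3 {n : ℕ} (F : ℂ × ℂ × ℂ → Matrix (Fin n) (Fin n) ℂ)
    (w : ℂ × ℂ × ℂ) : Matrix (Fin n) (Fin n) ℂ :=
  Matrix.of fun a b => deriv (fun z : ℂ => F (z, w.2.1, w.2.2) a b) w.1

/-- Entrywise partial derivative in the second variable `s`. -/
noncomputable def partialS3 {n : ℕ} (F : ℂ × ℂ × ℂ → Matrix (Fin n) (Fin n) ℂ)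
    (w : ℂ × ℂ × ℂ) : Matrix (Fin n) (Fin n) ℂ :=
  Matrix.of fun a b => deriv (fun s : ℂ => F (w.1, s, w.2.2) a b) w.2.1

/-- Entrywise partial derivative in the third variable `t`. -/
noncomputable def partialT3 {n : ℕ} (F : ℂ × ℂ × ℂ → Matrix (Fin n) (Fin n) ℂ)
    (w : ℂ × ℂ × ℂ) : Matrix (Fin n) (Fin n) ℂ :=
  Matrix.of fun a b => deriv (fun t : ℂ => F (w.1, w.2.1, t) a b) w.2.2

/-!
Write `Δ_ab = p_a - p_b`, `Q_ab = q_a - q_b`, `Q̃_ab = q̃_a - q̃_b`, so that `G_ab = z Q_ab H_ab / Δ_ab`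
and `G̃_ab = z Q̃_ab H_ab / Δ_ab`. Differentiating these quotients, `∂_s Δ = -r Q` and `∂_t Δ = -r Q̃`
contribute the same term `r Q Q̃ z H / Δ²` to `∂_s G̃` and `∂_t G`, and `Q̃ ∂_z G = Q ∂_z G̃`, so after
inserting the evolution equations for `H` only `z (Q [H, G̃] - Q̃ [H, G]) / Δ` survives. That this
equals `[G, G̃]` is a termwise identity in the matrix products, using `Q_ab = Q_ac + Q_cb`.
-/

open Filter Topology

section Algebra

variable {K ι : Type*} [Field K]

/-- `z · ad_q (ad_p⁻¹ H)` for diagonal `p` and `q`; for `q` and `q̃` these are the paper's `G` and `G̃`. -/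
def adRatio (z : K) (q p : ι → K) (H : Matrix ι ι K) : Matrix ι ι K :=
  Matrix.of fun a b => z * H a b * (q a - q b) / (p a - p b)

@[simp]
theorem adRatio_apply (z : K) (q p : ι → K) (H : Matrix ι ι K) (a b : ι) :
    adRatio z q p H a b = z * H a b * (q a - q b) / (p a - p b) :=
  rfl

theorem adRatio_apply_self (z : K) (q p : ι → K) (H : Matrix ι ι K) (a : ι) :
    adRatio z q p H a a = 0 := by
  simp

theorem adRatio_apply_eq_ite [DecidableEq ι] (z : K) (q p : ι → K) (H : Matrix ι ι K) (a b : ι) :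
    adRatio z q p H a b = if a = b then 0 else z * H a b * (q a - q b) / (p a - p b) := by
  split_ifs with hab
  · rw [hab, adRatio_apply_self]
  · rfl

theorem sub_mul_adRatio_apply_comm (z : K) (q q' p : ι → K) (H : Matrix ι ι K) (a b : ι) :
    (q' a - q' b) * adRatio z q p H a b = (q a - q b) * adRatio z q' p H a b := by
  simp only [adRatio_apply]
  ring

variable [Fintype ι]

theorem adRatio_commutator_apply_self (z : K) (q q' p : ι → K) (H : Matrix ι ι K) (a : ι) :
    (adRatio z q p H * adRatio z q' p H - adRatio z q' p H * adRatio z q p H) a a = 0 := by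
  simp only [Matrix.sub_apply, Matrix.mul_apply, ← Finset.sum_sub_distrib, adRatio_apply]
  exact Finset.sum_eq_zero fun c _ => by ring

theorem adRatio_commutator_apply {z : K} {q q' p : ι → K} (H : Matrix ι ι K)
    (hp : Function.Injective p) {a b : ι} (hab : a ≠ b) :
    (adRatio z q p H * adRatio z q' p H - adRatio z q' p H * adRatio z q p H) a b =
      z / (p a - p b) *
        ((q a - q b) * (H * adRatio z q' p H - adRatio z q' p H * H) a b -
          (q' a - q' b) * (H * adRatio z q p H - adRatio z q p H * H) a b) := by
  simp only [Matrix.sub_apply, Matrix.mul_apply, ← Finset.sum_sub_distrib, Finset.mul_sum]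
  refine Finset.sum_congr rfl fun c _ => ?_
  have hΔab : p a - p b ≠ 0 := sub_ne_zero.2 (hp.ne hab)
  rcases eq_or_ne c a with rfl | hca
  · simp only [adRatio_apply, sub_self, mul_zero, zero_div, zero_mul, sub_zero]
    field_simp
    ring
  rcases eq_or_ne c b with rfl | hcb
  · simp only [adRatio_apply, sub_self, mul_zero, zero_div]
    field_simp
    ring
  have hΔac : p a - p c ≠ 0 := sub_ne_zero.2 (hp.ne hca.symm)
  have hΔcb : p c - p b ≠ 0 := sub_ne_zero.2 (hp.ne hcb)
  simp only [adRatio_apply]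
  field_simp
  ring

end Algebra

section Derivatives

variable {𝕜 ι : Type*} [NontriviallyNormedField 𝕜] {F F' : 𝕜 → Matrix ι ι 𝕜}
  {P : 𝕜 → ι → 𝕜} {M : 𝕜 → Matrix ι ι 𝕜} {c : 𝕜 → 𝕜} {q q' : ι → 𝕜} {x : 𝕜} {a b : ι}

theorem deriv_adRatio_apply {z m' d' : 𝕜} (hF : ∀ᶠ y in 𝓝 x, F y = adRatio z q (P y) (M y))
    (hM : HasDerivAt (fun y => M y a b) m' x) (hP : HasDerivAt (fun y => P y a - P y b) d' x)
    (hab : P x a ≠ P x b) :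
    deriv (fun y => F y a b) x = (z * m' * (q a - q b) - F x a b * d') / (P x a - P x b) := by
  have hΔ : P x a - P x b ≠ 0 := sub_ne_zero.2 hab
  have hquot := ((hM.const_mul z).mul_const (q a - q b)).div hP hΔ
  rw [(hquot.congr_of_eventuallyEq (hF.mono fun y hy => by rw [hy, adRatio_apply]; rfl)).deriv,
    hF.self_of_nhds, adRatio_apply]
  field_simp

theorem deriv_adRatio_apply_self (hF : ∀ᶠ y in 𝓝 x, F y = adRatio (c y) q (P y) (M y)) :
    deriv (fun y => F y a a) x = 0 := by
  rw [EventuallyEq.deriv_eq (f := fun _ => 0) (hF.mono fun y hy => by rw [hy, adRatio_apply_self]),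
    deriv_const]

theorem sub_mul_deriv_adRatio_apply (hF : ∀ᶠ y in 𝓝 x, F y = adRatio (c y) q (P y) (M y))
    (hF' : ∀ᶠ y in 𝓝 x, F' y = adRatio (c y) q' (P y) (M y)) :
    (q' a - q' b) * deriv (fun y => F y a b) x = (q a - q b) * deriv (fun y => F' y a b) x := by
  rw [← deriv_const_mul_field, ← deriv_const_mul_field]
  refine EventuallyEq.deriv_eq ?_
  filter_upwards [hF, hF'] with y hy hy'
  rw [hy, hy', sub_mul_adRatio_apply_comm]

end Derivatives

theorem eventually_adRatio_along {ι : Type*} {U : Set (ℂ × ℂ × ℂ)} {F : ℂ × ℂ × ℂ → Matrix ι ι ℂ}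
    {p : ℂ × ℂ × ℂ → ι → ℂ} {H : ℂ × ℂ × ℂ → Matrix ι ι ℂ} {q : ι → ℂ} {ℓ : ℂ → ℂ × ℂ × ℂ} {x : ℂ}
    (hU : IsOpen U) (hx : ℓ x ∈ U) (hℓ : ContinuousAt ℓ x)
    (hF : ∀ w ∈ U, F w = adRatio w.1 q (p w) (H w)) :
    ∀ᶠ y in 𝓝 x, F (ℓ y) = adRatio (ℓ y).1 q (p (ℓ y)) (H (ℓ y)) :=
  (hℓ.eventually_mem (hU.mem_nhds hx)).mono fun _ hy => hF _ hy

theorem stmt7_general (n r : ℕ) (q qt : Fin n → ℂ)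
    (U : Set (ℂ × ℂ × ℂ)) (hU : IsOpen U)
    (p : ℂ × ℂ × ℂ → Fin n → ℂ) (H : ℂ × ℂ × ℂ → Matrix (Fin n) (Fin n) ℂ)
    (hpdist : ∀ w ∈ U, ∀ a b : Fin n, a ≠ b → p w a ≠ p w b)
    (G Gt : ℂ × ℂ × ℂ → Matrix (Fin n) (Fin n) ℂ)
    (hG : ∀ w ∈ U, ∀ a b : Fin n,
      G w a b = if a = b then 0 else w.1 * H w a b * (q a - q b) / (p w a - p w b))
    (hGt : ∀ w ∈ U, ∀ a b : Fin n,
      Gt w a b = if a = b then 0 else w.1 * H w a b * (qt a - qt b) / (p w a - p w b))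
    (hps : ∀ w ∈ U, ∀ a : Fin n,
      HasDerivAt (fun s : ℂ => p (w.1, s, w.2.2) a) (-(r : ℂ) * q a) w.2.1)
    (hpt : ∀ w ∈ U, ∀ a : Fin n,
      HasDerivAt (fun t : ℂ => p (w.1, w.2.1, t) a) (-(r : ℂ) * qt a) w.2.2)
    (hHs : ∀ w ∈ U, ∀ a b : Fin n,
      HasDerivAt (fun s : ℂ => H (w.1, s, w.2.2) a b)
        ((partialZ3 G w - (H w * G w - G w * H w)) a b) w.2.1)
    (hHt : ∀ w ∈ U, ∀ a b : Fin n,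
      HasDerivAt (fun t : ℂ => H (w.1, w.2.1, t) a b)
        ((partialZ3 Gt w - (H w * Gt w - Gt w * H w)) a b) w.2.2) :
    ∀ w ∈ U, partialS3 Gt w - partialT3 G w = G w * Gt w - Gt w * G w := by
  rintro ⟨z, s, t⟩ hw
  have hGU : ∀ w ∈ U, G w = adRatio w.1 q (p w) (H w) := fun w hw =>
    Matrix.ext fun a b => by rw [hG w hw, adRatio_apply_eq_ite]
  have hGtU : ∀ w ∈ U, Gt w = adRatio w.1 qt (p w) (H w) := fun w hw =>
    Matrix.ext fun a b => by rw [hGt w hw, adRatio_apply_eq_ite]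
  have hGz := eventually_adRatio_along (ℓ := fun y => (y, s, t)) hU hw (by fun_prop) hGU
  have hGtz := eventually_adRatio_along (ℓ := fun y => (y, s, t)) hU hw (by fun_prop) hGtU
  have hGt_s := eventually_adRatio_along (ℓ := fun y => (z, y, t)) hU hw (by fun_prop) hGtU
  have hG_t := eventually_adRatio_along (ℓ := fun y => (z, s, y)) hU hw (by fun_prop) hGU
  ext a b
  simp only [Matrix.sub_apply, partialS3, partialT3, Matrix.of_apply]
  rcases eq_or_ne a b with rfl | hab
  · rw [deriv_adRatio_apply_self hGt_s, deriv_adRatio_apply_self hG_t, sub_self, hGU _ hw,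
      hGtU _ hw, ← Matrix.sub_apply, adRatio_commutator_apply_self]
  have hpw : Function.Injective (p (z, s, t)) := fun a b hp =>
    by_contra fun hne => hpdist _ hw a b hne hp
  have hZ : (qt a - qt b) * partialZ3 G (z, s, t) a b = (q a - q b) * partialZ3 Gt (z, s, t) a b :=
    sub_mul_deriv_adRatio_apply hGz hGtz
  have hGG := sub_mul_adRatio_apply_comm z q qt (p (z, s, t)) (H (z, s, t)) a b
  rw [deriv_adRatio_apply hGt_s (hHs _ hw a b) ((hps _ hw a).sub (hps _ hw b)) (hpw.ne hab),
    deriv_adRatio_apply hG_t (hHt _ hw a b) ((hpt _ hw a).sub (hpt _ hw b)) (hpw.ne hab),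
    ← Matrix.sub_apply, hGU _ hw, hGtU _ hw, adRatio_commutator_apply _ hpw hab]
  simp only [Matrix.sub_apply]
  linear_combination (z * hZ - r * hGG) / (p (z, s, t) a - p (z, s, t) b)

/-- The integrability identity `∂_i H_j - ∂_j H_i = [H_i, H_j]` from the proof of
Proposition 2 of the paper: with `G, G̃` built from `H` and the constant diagonal
matrices `q, q̃`, the evolution equations `∂_s p = -r q`, `∂_t p = -r q̃`,
`∂_s H = ∂_z G - [H,G]`, `∂_t H = ∂_z G̃ - [H,G̃]` imply
`∂_s G̃ - ∂_t G = [G, G̃]`. -/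
theorem stmt7 (n r : ℕ) (hn : 2 ≤ n) (hr : 1 ≤ r) (q qt : Fin n → ℂ)
    (U : Set (ℂ × ℂ × ℂ)) (hU : IsOpen U)
    (p : ℂ × ℂ × ℂ → Fin n → ℂ) (H : ℂ × ℂ × ℂ → Matrix (Fin n) (Fin n) ℂ)
    (hphol : ∀ a : Fin n, DifferentiableOn ℂ (fun w => p w a) U)
    (hHhol : ∀ a b : Fin n, DifferentiableOn ℂ (fun w => H w a b) U)
    (hpdist : ∀ w ∈ U, ∀ a b : Fin n, a ≠ b → p w a ≠ p w b)
    (hHoffdiag : ∀ w ∈ U, ∀ a : Fin n, H w a a = 0)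
    (G Gt : ℂ × ℂ × ℂ → Matrix (Fin n) (Fin n) ℂ)
    (hG : ∀ w ∈ U, ∀ a b : Fin n,
      G w a b = if a = b then 0 else w.1 * H w a b * (q a - q b) / (p w a - p w b))
    (hGt : ∀ w ∈ U, ∀ a b : Fin n,
      Gt w a b = if a = b then 0 else w.1 * H w a b * (qt a - qt b) / (p w a - p w b))
    (hps : ∀ w ∈ U, ∀ a : Fin n,
      HasDerivAt (fun s : ℂ => p (w.1, s, w.2.2) a) (-(r : ℂ) * q a) w.2.1)
    (hpt : ∀ w ∈ U, ∀ a : Fin n,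
      HasDerivAt (fun t : ℂ => p (w.1, w.2.1, t) a) (-(r : ℂ) * qt a) w.2.2)
    (hHs : ∀ w ∈ U, ∀ a b : Fin n,
      HasDerivAt (fun s : ℂ => H (w.1, s, w.2.2) a b)
        ((partialZ3 G w - (H w * G w - G w * H w)) a b) w.2.1)
    (hHt : ∀ w ∈ U, ∀ a b : Fin n,
      HasDerivAt (fun t : ℂ => H (w.1, w.2.1, t) a b)
        ((partialZ3 Gt w - (H w * Gt w - Gt w * H w)) a b) w.2.2) :
    ∀ w ∈ U, partialS3 Gt w - partialT3 G w = G w * Gt w - Gt w * G w :=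
  stmt7_general n r q qt U hU p H hpdist G Gt hG hGt hps hpt hHs hHt
end

section
/- Let n ≥ 1 and r ≥ 1 be integers. Let C_1, …, C_{2r+1} be invertible n×n complex matrices, m a diagonal n×n complex matrix, and M an invertible n×n complex matrix with C_{2r+1} = exp(−2πi·m)·C_1·M. Let γ_1, …, γ_{2r+1} and γ′_1, …, γ′_{2r+1} be n×n complex matrices and μ, μ′ diagonal n×n complex matrices satisfying the linearized relations γ_{2r+1} = exp(−2πi·m)·(γ_1 − 2πi·μ·C_1)·M and γ′_{2r+1} = exp(−2πi·m)·(γ′_1 − 2πi·μ′·C_1)·M. For each 1 ≤ i ≤ 2r set σ_i = C_i·(C_i^{−1}γ_i − C_{i+1}^{−1}γ_{i+1})·C_i^{−1} and σ′_i = C_i·(C_i^{−1}γ′_i − C_{i+1}^{−1}γ′_{i+1})·C_i^{−1}, and assume tr(σ_i·σ′_i) = 0 for every i. Define ω(γ,μ; γ′,μ′) = (1/(2πi))·Σ_{i=1}^{2r} tr( γ_i·C_i^{−1}·σ′_i ) + πi·tr(μ·μ′) − tr( γ_1·C_1^{−1}·μ′ ). Then ω(γ,μ; γ′,μ′) = −ω(γ′,μ′;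 γ,μ). -/
/-! Write `A i = (C i)⁻¹ γ i`. Invariance of the trace under conjugation turns the `i`-th terms of
`ω(γ,μ;γ',μ') + ω(γ',μ';γ,μ)` into `tr (A i (A' i - A' (i+1))) + tr (A' i (A i - A (i+1)))`, which
by `tr (σᵢ σ'ᵢ) = 0` equals `tr (A i A' i) - tr (A (i+1) A' (i+1))`. The sum telescopes, and the
linearized monodromy relation exhibits `A (2r+1)` as the conjugate of `γ 1 (C 1)⁻¹ - 2πi μ` by
`C 1 M`, so the two boundary terms cancel the `μ`-terms of `ω`. -/

namespace Matrix

variable {n R : Type*} [Fintype n] [CommRing R]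

theorem trace_mul_sub_add_trace_mul_sub {a b a' b' : Matrix n n R}
    (h : trace ((a - b) * (a' - b')) = 0) :
    trace (a * (a' - b')) + trace (a' * (a - b)) = trace (a * a') - trace (b * b') := by
  simp only [Matrix.mul_sub, Matrix.sub_mul, trace_sub] at h ⊢
  linear_combination h + trace_mul_comm a' a - trace_mul_comm a' b

theorem sum_trace_mul_sub_add_trace_mul_sub {A A' : ℕ → Matrix n n R} (N : ℕ)
    (h : ∀ i ∈ Finset.Icc 1 N, trace ((A i - A (i + 1)) * (A' i - A' (i + 1))) = 0) :
    ∑ i ∈ Finset.Icc 1 N, (trace (A i * (A' i - A' (i + 1))) + trace (A' i * (A i - A (i + 1))))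
      = trace (A 1 * A' 1) - trace (A (N + 1) * A' (N + 1)) := by
  rw [Finset.sum_congr rfl fun i hi => trace_mul_sub_add_trace_mul_sub (h i hi),
    ← Finset.Ico_add_one_right_eq_Icc, ← neg_sub,
    ← Finset.sum_Ico_sub (fun i => trace (A i * A' i)) (by omega : 1 ≤ N + 1),
    ← Finset.sum_neg_distrib]
  simp only [neg_sub]

variable [DecidableEq n]

theorem trace_conj_mul_conj_of_mul_eq_one {P Q : Matrix n n R} (h : Q * P = 1)
    (X Y : Matrix n n R) : trace (P * X * Q * (P * Y * Q)) = trace (X * Y) := by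
  have hcancel : P * X * Q * (P * Y * Q) = P * (X * Y * Q) := by
    rw [show P * X * Q * (P * Y * Q) = P * (X * (Q * P) * Y * Q) by noncomm_ring, h,
      Matrix.mul_one]
  rw [hcancel, trace_mul_comm, Matrix.mul_assoc, h, Matrix.mul_one]

theorem trace_mul_conj_of_mul_eq_one {P Q : Matrix n n R} (h : Q * P = 1)
    (g X : Matrix n n R) : trace (g * Q * (P * X * Q)) = trace (Q * g * X) := by
  have hcancel : g * Q * (P * X * Q) = g * X * Q := by
    rw [show g * Q * (P * X * Q) = g * (Q * P) * X * Q by noncomm_ring, h, Matrix.mul_one]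
  rw [hcancel, trace_mul_comm, Matrix.mul_assoc]

theorem inv_mul_monodromy_variation {E C M : Matrix n n R} (hE : IsUnit E) (hC : IsUnit C)
    (c : R) (g D : Matrix n n R) :
    (E * C * M)⁻¹ * (E * (g - c • (D * C)) * M) = (C * M)⁻¹ * (g * C⁻¹ - c • D) * (C * M) := by
  have hE' : E⁻¹ * E = 1 := nonsing_inv_mul E ((isUnit_iff_isUnit_det E).mp hE)
  have hC' : C⁻¹ * C = 1 := nonsing_inv_mul C ((isUnit_iff_isUnit_det C).mp hC)
  have hfactor : g - c • (D * C) = (g * C⁻¹ - c • D) * C := by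
    rw [Matrix.sub_mul, Matrix.mul_assoc, hC', Matrix.mul_one, Matrix.smul_mul]
  rw [mul_inv_rev, mul_inv_rev, mul_inv_rev, hfactor]
  calc M⁻¹ * (C⁻¹ * E⁻¹) * (E * ((g * C⁻¹ - c • D) * C) * M)
      = M⁻¹ * C⁻¹ * (E⁻¹ * E) * (g * C⁻¹ - c • D) * (C * M) := by noncomm_ring
    _ = M⁻¹ * C⁻¹ * (g * C⁻¹ - c • D) * (C * M) := by rw [hE', Matrix.mul_one]

theorem trace_monodromy_variation_mul {E C M : Matrix n n R} (hE : IsUnit E) (hC : IsUnit C)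
    (hM : IsUnit M) (c : R) (g g' D D' : Matrix n n R) :
    trace ((E * C * M)⁻¹ * (E * (g - c • (D * C)) * M)
        * ((E * C * M)⁻¹ * (E * (g' - c • (D' * C)) * M)))
      = trace (C⁻¹ * g * (C⁻¹ * g')) - c * trace (g * C⁻¹ * D') - c * trace (g' * C⁻¹ * D)
        + c ^ 2 * trace (D * D') := by
  have hCM : C * M * (C * M)⁻¹ = 1 :=
    mul_nonsing_inv _ ((isUnit_iff_isUnit_det _).mp (hC.mul hM))
  rw [inv_mul_monodromy_variation hE hC, inv_mul_monodromy_variation hE hC,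
    trace_conj_mul_conj_of_mul_eq_one hCM]
  simp only [Matrix.mul_sub, Matrix.sub_mul, Matrix.smul_mul, Matrix.mul_smul, trace_sub,
    trace_smul, smul_eq_mul]
  have hcycle : trace (g * C⁻¹ * (g' * C⁻¹)) = trace (C⁻¹ * g * (C⁻¹ * g')) := by
    have := trace_mul_comm (g * C⁻¹ * g') C⁻¹
    simp only [Matrix.mul_assoc] at this ⊢
    exact this
  linear_combination hcycle - c * trace_mul_comm D (g' * C⁻¹)

end Matrix

theorem stmt9_general (n r : ℕ)
    (C : ℕ → Matrix (Fin n) (Fin n) ℂ)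
    (hC : ∀ i, 1 ≤ i → i ≤ 2 * r + 1 → IsUnit (C i))
    (md : Fin n → ℂ) (M : Matrix (Fin n) (Fin n) ℂ) (hM : IsUnit M)
    (E : Matrix (Fin n) (Fin n) ℂ)
    (hE : E = Matrix.diagonal fun a => Complex.exp (-(2 * (Real.pi : ℂ) * Complex.I) * md a))
    (hrel : C (2 * r + 1) = E * C 1 * M)
    (γ γ' : ℕ → Matrix (Fin n) (Fin n) ℂ) (μd μ'd : Fin n → ℂ)
    (hγ : γ (2 * r + 1)
      = E * (γ 1 - (2 * (Real.pi : ℂ) * Complex.I) • (Matrix.diagonal μd * C 1)) * M)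
    (hγ' : γ' (2 * r + 1)
      = E * (γ' 1 - (2 * (Real.pi : ℂ) * Complex.I) • (Matrix.diagonal μ'd * C 1)) * M)
    (σf : (ℕ → Matrix (Fin n) (Fin n) ℂ) → ℕ → Matrix (Fin n) (Fin n) ℂ)
    (hσf : ∀ g i, σf g i
      = C i * ((C i)⁻¹ * g i - (C (i + 1))⁻¹ * g (i + 1)) * (C i)⁻¹)
    (htr : ∀ i, 1 ≤ i → i ≤ 2 * r → (σf γ i * σf γ' i).trace = 0)
    (ω : (ℕ → Matrix (Fin n) (Fin n) ℂ) → (Fin n → ℂ)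
      → (ℕ → Matrix (Fin n) (Fin n) ℂ) → (Fin n → ℂ) → ℂ)
    (hω : ∀ g mu g' mu', ω g mu g' mu'
      = (2 * (Real.pi : ℂ) * Complex.I)⁻¹
          * ∑ i ∈ Finset.Icc 1 (2 * r), (g i * (C i)⁻¹ * σf g' i).trace
        + (Real.pi : ℂ) * Complex.I
            * (Matrix.diagonal mu * Matrix.diagonal mu').trace
        - (g 1 * (C 1)⁻¹ * Matrix.diagonal mu').trace) :
    ω γ μd γ' μ'd = -ω γ' μ'd γ μd := by
  set c : ℂ := 2 * (Real.pi : ℂ) * Complex.I with hc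
  have hc0 : c ≠ 0 := by simp [hc, Real.pi_ne_zero]
  have hE_unit : IsUnit E := by
    rw [hE, Matrix.isUnit_diagonal, Pi.isUnit_iff]
    exact fun a => (Complex.exp_ne_zero _).isUnit
  have hC_inv : ∀ i ∈ Finset.Icc 1 (2 * r), (C i)⁻¹ * C i = 1 := fun i hi =>
    Matrix.nonsing_inv_mul _ <| (Matrix.isUnit_iff_isUnit_det _).mp <|
      hC i (Finset.mem_Icc.mp hi).1 (by grind)
  have hterm : ∀ g g' : ℕ → Matrix (Fin n) (Fin n) ℂ, ∀ i ∈ Finset.Icc 1 (2 * r),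
      (g i * (C i)⁻¹ * σf g' i).trace
        = ((C i)⁻¹ * g i * ((C i)⁻¹ * g' i - (C (i + 1))⁻¹ * g' (i + 1))).trace :=
    fun g g' i hi => by rw [hσf]; exact Matrix.trace_mul_conj_of_mul_eq_one (hC_inv i hi) _ _
  have hsum := Matrix.sum_trace_mul_sub_add_trace_mul_sub (A := fun i => (C i)⁻¹ * γ i)
    (A' := fun i => (C i)⁻¹ * γ' i) (2 * r) fun i hi => by
      have := htr i (Finset.mem_Icc.mp hi).1 (Finset.mem_Icc.mp hi).2
      rwa [hσf, hσf, Matrix.trace_conj_mul_conj_of_mul_eq_one (hC_inv i hi)] at this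
  have hboundary := Matrix.trace_monodromy_variation_mul hE_unit (hC 1 le_rfl (by omega)) hM c
    (γ 1) (γ' 1) (Matrix.diagonal μd) (Matrix.diagonal μ'd)
  rw [← hrel, ← hγ, ← hγ'] at hboundary
  rw [Finset.sum_add_distrib] at hsum
  rw [hω, hω, Finset.sum_congr rfl (hterm γ γ'), Finset.sum_congr rfl (hterm γ' γ)]
  -- `c⁻¹ c² tr (μ μ') = c tr (μ μ')` is cancelled by the two `πi tr (μ μ')` terms
  linear_combination c⁻¹ * hsum - c⁻¹ * hboundary
    + ((γ 1 * (C 1)⁻¹ * Matrix.diagonal μ'd).trace + (γ' 1 * (C 1)⁻¹ * Matrix.diagonal μd).trace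
      - c * (Matrix.diagonal μd * Matrix.diagonal μ'd).trace) * inv_mul_cancel₀ hc0
    + (Real.pi : ℂ) * Complex.I * Matrix.trace_mul_comm (Matrix.diagonal μ'd) (Matrix.diagonal μd)

/-- Skew-symmetry of the 2-form `ω` on the space `C_r` of Stokes data (appendix
of the paper): with connection matrices `C i` (`1 ≤ i ≤ 2r+1`), exponent of
formal monodromy `m = diagonal md`, monodromy `M`, `C (2r+1) = e^{-2πim} C 1 M`,
tangent vectors `(γ, μ)`, `(γ', μ')` satisfying the linearized relation, induced
variations `σf g i = C i (C i⁻¹ g i - C (i+1)⁻¹ g (i+1)) C i⁻¹` of the Stokes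
matrices with `tr (σᵢ σ'ᵢ) = 0`, one has `ω(γ,μ;γ',μ') = -ω(γ',μ';γ,μ)`. -/
theorem stmt9 (n r : ℕ) (hn : 1 ≤ n) (hr : 1 ≤ r)
    (C : ℕ → Matrix (Fin n) (Fin n) ℂ)
    (hC : ∀ i, 1 ≤ i → i ≤ 2 * r + 1 → IsUnit (C i))
    (md : Fin n → ℂ) (M : Matrix (Fin n) (Fin n) ℂ) (hM : IsUnit M)
    (E : Matrix (Fin n) (Fin n) ℂ)
    (hE : E = Matrix.diagonal fun a => Complex.exp (-(2 * (Real.pi : ℂ) * Complex.I) * md a))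
    (hrel : C (2 * r + 1) = E * C 1 * M)
    (γ γ' : ℕ → Matrix (Fin n) (Fin n) ℂ) (μd μ'd : Fin n → ℂ)
    (hγ : γ (2 * r + 1)
      = E * (γ 1 - (2 * (Real.pi : ℂ) * Complex.I) • (Matrix.diagonal μd * C 1)) * M)
    (hγ' : γ' (2 * r + 1)
      = E * (γ' 1 - (2 * (Real.pi : ℂ) * Complex.I) • (Matrix.diagonal μ'd * C 1)) * M)
    (σf : (ℕ → Matrix (Fin n) (Fin n) ℂ) → ℕ → Matrix (Fin n) (Fin n) ℂ)
    (hσf : ∀ g i, σf g i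
      = C i * ((C i)⁻¹ * g i - (C (i + 1))⁻¹ * g (i + 1)) * (C i)⁻¹)
    (htr : ∀ i, 1 ≤ i → i ≤ 2 * r → (σf γ i * σf γ' i).trace = 0)
    (ω : (ℕ → Matrix (Fin n) (Fin n) ℂ) → (Fin n → ℂ)
      → (ℕ → Matrix (Fin n) (Fin n) ℂ) → (Fin n → ℂ) → ℂ)
    (hω : ∀ g mu g' mu', ω g mu g' mu'
      = (2 * (Real.pi : ℂ) * Complex.I)⁻¹
          * ∑ i ∈ Finset.Icc 1 (2 * r), (g i * (C i)⁻¹ * σf g' i).trace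
        + (Real.pi : ℂ) * Complex.I
            * (Matrix.diagonal mu * Matrix.diagonal mu').trace
        - (g 1 * (C 1)⁻¹ * Matrix.diagonal mu').trace) :
    ω γ μd γ' μ'd = -ω γ' μ'd γ μd :=
  stmt9_general n r C hC md M hM E hE hrel γ γ' μd μ'd hγ hγ' σf hσf htr ω hω
end

section
/- Let C and M be invertible n×n complex matrices, m, μ, μ′ diagonal n×n complex matrices, and c, c′ arbitrary n×n complex matrices. Put D = exp(−2πi·m)·C·M, d = exp(−2πi·m)·(c − 2πi·μ·C)·M, and d′ = exp(−2πi·m)·(c′ − 2πi·μ′·C)·M. Then tr( D^{−1}·d·D^{−1}·d′ ) = tr( C^{−1}·c·C^{−1}·c′ ) − 4π²·tr(μ·μ′) − 2πi·tr( μ·c′·C^{−1} + μ′·c·C^{−1} ). -/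
/-- The boundary identity from the appendix of the paper: with
`E = e^{-2πi m}` (`m = diagonal md`), `D = E C M`, `d = E (c - 2πi μ C) M`,
`d' = E (c' - 2πi μ' C) M`, one has
`tr(D⁻¹ d D⁻¹ d') = tr(C⁻¹ c C⁻¹ c') - 4π² tr(μ μ') - 2πi tr(μ c' C⁻¹ + μ' c C⁻¹)`. -/
theorem stmt10 (n : ℕ) (C M c c' : Matrix (Fin n) (Fin n) ℂ)
    (hC : IsUnit C) (hM : IsUnit M) (md μd μ'd : Fin n → ℂ)
    (E D d d' : Matrix (Fin n) (Fin n) ℂ)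
    (hE : E = Matrix.diagonal fun a => Complex.exp (-(2 * (Real.pi : ℂ) * Complex.I) * md a))
    (hD : D = E * C * M)
    (hd : d = E * (c - (2 * (Real.pi : ℂ) * Complex.I) • (Matrix.diagonal μd * C)) * M)
    (hd' : d' = E * (c' - (2 * (Real.pi : ℂ) * Complex.I) • (Matrix.diagonal μ'd * C)) * M) :
    (D⁻¹ * d * D⁻¹ * d').trace
      = (C⁻¹ * c * C⁻¹ * c').trace
        - 4 * (Real.pi : ℂ) ^ 2 * (Matrix.diagonal μd * Matrix.diagonal μ'd).trace
        - 2 * (Real.pi : ℂ) * Complex.I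
            * (Matrix.diagonal μd * c' * C⁻¹ + Matrix.diagonal μ'd * c * C⁻¹).trace := by
  set t : ℂ := 2 * (Real.pi : ℂ) * Complex.I with ht
  set u := Matrix.diagonal μd with hu
  set u' := Matrix.diagonal μ'd with hu'
  have hEu : IsUnit E := by
    rw [hE, Matrix.isUnit_diagonal]
    refine IsUnit.of_mul_eq_one (fun a => Complex.exp ((2 * (Real.pi : ℂ) * Complex.I) * md a)) ?_
    funext a
    simp [← Complex.exp_add, ht]
  have hEi : E⁻¹ * E = 1 := Matrix.nonsing_inv_mul E ((Matrix.isUnit_iff_isUnit_det E).mp hEu)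
  have hMi : M * M⁻¹ = 1 := Matrix.mul_nonsing_inv M ((Matrix.isUnit_iff_isUnit_det M).mp hM)
  have hCi : C * C⁻¹ = 1 := Matrix.mul_nonsing_inv C ((Matrix.isUnit_iff_isUnit_det C).mp hC)
  set X := c - t • (u * C) with hX
  set X' := c' - t • (u' * C) with hX'
  have h1 : D⁻¹ * d = M⁻¹ * (C⁻¹ * X) * M := by
    rw [hD, hd, Matrix.mul_inv_rev, Matrix.mul_inv_rev]
    calc M⁻¹ * (C⁻¹ * E⁻¹) * (E * X * M)
        = M⁻¹ * (C⁻¹ * ((E⁻¹ * E) * X)) * M := by noncomm_ring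
      _ = M⁻¹ * (C⁻¹ * X) * M := by rw [hEi, one_mul]
  have h2 : D⁻¹ * d * D⁻¹ * d' = M⁻¹ * (C⁻¹ * X * (C⁻¹ * X')) * M := by
    have h1' : D⁻¹ * d' = M⁻¹ * (C⁻¹ * X') * M := by
      rw [hD, hd', Matrix.mul_inv_rev, Matrix.mul_inv_rev]
      calc M⁻¹ * (C⁻¹ * E⁻¹) * (E * X' * M)
          = M⁻¹ * (C⁻¹ * ((E⁻¹ * E) * X')) * M := by noncomm_ring
        _ = M⁻¹ * (C⁻¹ * X') * M := by rw [hEi, one_mul]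
    calc D⁻¹ * d * D⁻¹ * d' = (D⁻¹ * d) * (D⁻¹ * d') := by noncomm_ring
      _ = M⁻¹ * (C⁻¹ * X) * M * (M⁻¹ * (C⁻¹ * X') * M) := by rw [h1, h1']
      _ = M⁻¹ * ((C⁻¹ * X) * (M * M⁻¹) * (C⁻¹ * X')) * M := by noncomm_ring
      _ = M⁻¹ * (C⁻¹ * X * (C⁻¹ * X')) * M := by rw [hMi, Matrix.mul_one]
  rw [h2]
  rw [show M⁻¹ * (C⁻¹ * X * (C⁻¹ * X')) * M = M⁻¹ * ((C⁻¹ * X * (C⁻¹ * X')) * M) by noncomm_ring,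
    Matrix.trace_mul_comm]
  rw [show C⁻¹ * X * (C⁻¹ * X') * M * M⁻¹ = C⁻¹ * X * (C⁻¹ * X') * (M * M⁻¹) by noncomm_ring,
    hMi, Matrix.mul_one]
  -- now expand
  have expand : C⁻¹ * X * (C⁻¹ * X')
      = C⁻¹ * c * C⁻¹ * c' - t • (C⁻¹ * c * C⁻¹ * (u' * C))
        - t • (C⁻¹ * (u * C) * C⁻¹ * c') + (t * t) • (C⁻¹ * (u * C) * C⁻¹ * (u' * C)) := by
    rw [hX, hX']
    simp only [Matrix.mul_sub, Matrix.sub_mul, Matrix.mul_smul, Matrix.smul_mul, smul_smul]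
    noncomm_ring
    module
  rw [expand]
  simp only [Matrix.trace_sub, Matrix.trace_add, Matrix.trace_smul, smul_eq_mul]
  have e1 : (C⁻¹ * c * C⁻¹ * (u' * C)).trace = (u' * c * C⁻¹).trace := by
    rw [show C⁻¹ * c * C⁻¹ * (u' * C) = (C⁻¹ * c * C⁻¹ * u') * C by noncomm_ring,
      Matrix.trace_mul_comm, show C * (C⁻¹ * c * C⁻¹ * u') = (C * C⁻¹) * (c * (C⁻¹ * u')) by noncomm_ring,
      hCi, Matrix.one_mul, Matrix.trace_mul_comm, Matrix.mul_assoc, Matrix.trace_mul_comm]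
  have e2 : (C⁻¹ * (u * C) * C⁻¹ * c').trace = (u * c' * C⁻¹).trace := by
    rw [show C⁻¹ * (u * C) * C⁻¹ * c' = C⁻¹ * (u * (C * C⁻¹) * c') by noncomm_ring, hCi,
      Matrix.mul_one, Matrix.trace_mul_comm,
      show u * c' * C⁻¹ = u * (c' * C⁻¹) by noncomm_ring]
  have e3 : (C⁻¹ * (u * C) * C⁻¹ * (u' * C)).trace = (u * u').trace := by
    rw [show C⁻¹ * (u * C) * C⁻¹ * (u' * C) = C⁻¹ * (u * (C * C⁻¹) * (u' * C)) by noncomm_ring,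
      hCi, Matrix.mul_one, Matrix.trace_mul_comm,
      show u * (u' * C) * C⁻¹ = u * u' * (C * C⁻¹) by noncomm_ring, hCi, Matrix.mul_one]
  have htt : t * t = -(4 * (Real.pi:ℂ)^2) := by
    rw [ht]; ring_nf; rw [Complex.I_sq]; ring
  rw [e1, e2, e3, htt]
  ring
end
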